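/- Let G be an infinite FC-group with finitely many automorphism orbits. If ω(G) is odd, then G has finite exponent. -/

import Mathlib

/-- The number of automorphism orbits of a group `G`: the number of orbits of the
natural action of `Aut(G)` on `G`. -/
noncomputable def omegaOrbits (G : Type*) [Group G] : ℕ :=
  Nat.card (Quotient (MulAction.orbitRel (MulAut G) G))

/-- `G` is an FC-group: every element has a finite conjugacy class. -/
def IsFCGroup (G : Type*) [Group G] : Prop :=
  ∀ g : G, {h : G | IsConj g h}.Finite

/-- `G` has finitely many automorphism orbits. -/
def HasFinitelyManyAutOrbits (G : Type*) [Group G] : Prop :=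
  Finite (Quotient (MulAction.orbitRel (MulAut G) G))

/-!
Order and conjugacy-class size are invariant under automorphisms, so finitely many orbits bound
both: torsion elements satisfy `g ^ e = 1`, and `g ^ k` is central for all `g`. Let `D` be the
set of central elements having an `n`-th root in the centre for every `n > 0`. The orbits of
`a, a ^ n, a ^ (n ^ 2), …` repeat, which shows that `a ^ e ∈ D` for central `a`; so `g ^ M ∈ D`
with `M = k * e`. `D` is characteristic, torsion-free and divisible, i.e. a `ℚ`-vector space on
which `Aut D` is transitive off `1`. In an FC-group `(a * b) ^ n = a ^ n * b ^ n` for some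
`n > 0` (transfer into the centre of `⟨a, b⟩`), and uniqueness of roots in `D` makes
`g ↦ (g ^ M) ^ (1 / M)` a retraction `r : G → D` whose kernel is the set `T` of torsion elements,
so `G ≅ T × D`. If `G` is not torsion then `D ≠ 1`, and `g ↦ g * (r g)⁻¹` pairs the non-torsion
orbits with the torsion ones, so `ω(G)` is even.
-/

open Subgroup MulAction

theorem Module.exists_linearEquiv_apply_eq {K V : Type*} [DivisionRing K] [AddCommGroup V]
    [Module K V] {u v : V} (hu : u ≠ 0) (hv : v ≠ 0) : ∃ g : V ≃ₗ[K] V, g u = v := by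
  obtain ⟨g, hg⟩ := Submodule.exists_linearEquiv_restrict_eq
    ((LinearEquiv.toSpanNonzeroSingleton K V u hu).symm ≪≫ₗ
      LinearEquiv.toSpanNonzeroSingleton K V v hv)
  refine ⟨g, ?_⟩
  rw [← hg ⟨u, Submodule.mem_span_singleton_self u⟩]
  simp [LinearEquiv.coord_self]

theorem DivisibleHull.coe_surjective {A : Type*} [AddCommGroup A] [IsAddTorsionFree A]
    (hdiv : ∀ (a : A) (n : ℕ), n ≠ 0 → ∃ b, n • b = a) :
    Function.Surjective ((↑) : A → DivisibleHull A) := by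
  intro x
  induction x with
  | mk m s =>
    obtain ⟨b, hb⟩ := hdiv m s s.ne_zero
    exact ⟨b, by rw [DivisibleHull.mk_eq_mk_iff_smul_eq_smul]; simp [hb]⟩

theorem AddCommGroup.exists_addEquiv_apply_eq {A : Type*} [AddCommGroup A] [IsAddTorsionFree A]
    (hdiv : ∀ (a : A) (n : ℕ), n ≠ 0 → ∃ b, n • b = a) {a b : A} (ha : a ≠ 0) (hb : b ≠ 0) :
    ∃ σ : A ≃+ A, σ a = b := by
  let e : A ≃+ DivisibleHull A := AddEquiv.ofBijective (DivisibleHull.coeAddMonoidHom A)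
    ⟨DivisibleHull.coe_injective, DivisibleHull.coe_surjective hdiv⟩
  obtain ⟨g, hg⟩ := Module.exists_linearEquiv_apply_eq (K := ℚ)
    (e.map_ne_zero_iff.mpr ha) (e.map_ne_zero_iff.mpr hb)
  exact ⟨e.trans (g.toAddEquiv.trans e.symm), by simp [hg]⟩

theorem CommGroup.exists_mulEquiv_apply_eq {A : Type*} [CommGroup A] [IsMulTorsionFree A]
    (hdiv : ∀ (a : A) (n : ℕ), n ≠ 0 → ∃ b, b ^ n = a) {a b : A} (ha : a ≠ 1) (hb : b ≠ 1) :
    ∃ σ : A ≃* A, σ a = b := by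
  obtain ⟨σ, hσ⟩ := AddCommGroup.exists_addEquiv_apply_eq (A := Additive A)
    (fun a n hn => (hdiv a.toMul n hn).imp fun b hb => congrArg Additive.ofMul hb)
    (a := .ofMul a) (b := .ofMul b) ha hb
  exact ⟨MulEquiv.toAdditive.symm σ, hσ⟩

theorem Setoid.even_card_quotient_of_fold {α : Type*} (s : Setoid α) (P : α → Prop) (f : α → α)
    (hP : ∀ a b, s a b → (P a ↔ P b)) (hf : ∀ a b, s a b → s (f a) (f b))
    (hPf : ∀ a, P (f a)) (hfix : ∀ a, P a → f a = a)
    (hinj : ∀ a b, ¬ P a → ¬ P b → s (f a) (f b) → s a b)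
    (hsurj : ∀ a, P a → ∃ b, ¬ P b ∧ f b = a) :
    Even (Nat.card (Quotient s)) := by
  classical
  let T := Set.range fun a : {a // P a} => (⟦a.1⟧ : Quotient s)
  let Θ : Quotient s → T × Bool := Quotient.lift
    (fun a => (⟨⟦f a⟧, ⟨f a, hPf a⟩, rfl⟩, decide (P a)))
    (fun a b hab => by simp [Quotient.sound (hf a b hab), hP a b hab])
  have hΘ : Function.Bijective Θ := by
    constructor
    · rintro ⟨a⟩ ⟨b⟩ h
      obtain ⟨hfab, hPab⟩ := Prod.ext_iff.mp h
      replace hfab : s (f a) (f b) := Quotient.exact (congrArg Subtype.val hfab)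
      replace hPab : P a ↔ P b := decide_eq_decide.mp hPab
      by_cases ha : P a
      · rw [hfix a ha, hfix b (hPab.mp ha)] at hfab
        exact Quotient.sound hfab
      · exact Quotient.sound (hinj a b ha (mt hPab.mpr ha) hfab)
    · rintro ⟨⟨_, ⟨a, ha⟩, rfl⟩, bb⟩
      cases bb with
      | true => exact ⟨⟦a⟧, by simp [Θ, hfix a ha, ha]⟩
      | false =>
        obtain ⟨b, hb, rfl⟩ := hsurj a ha
        exact ⟨⟦b⟧, by simp [Θ, hb]⟩
  rw [Nat.card_eq_of_bijective Θ hΘ, Nat.card_prod, Nat.card_eq_fintype_card (α := Bool),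
    Fintype.card_bool]
  exact even_two.mul_left _

theorem finite_range_of_smul_invariant {M α β : Type*} [Group M] [MulAction M α]
    [Finite (orbitRel.Quotient M α)] (f : α → β) (hf : ∀ (m : M) (a : α), f (m • a) = f a) :
    (Set.range f).Finite := by
  have hf' : ∀ a b, orbitRel M α a b → f a = f b := by
    rintro a b ⟨m, rfl⟩
    exact hf m b
  rw [← Set.range_quotient_lift (s := orbitRel M α) hf']
  exact Set.finite_range _

theorem exists_pow_eq_one_of_finite_range_orderOf {G : Type*} [Monoid G]
    (h : (Set.range (orderOf : G → ℕ)).Finite) :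
    ∃ e, 0 < e ∧ ∀ g : G, IsOfFinOrder g → g ^ e = 1 := by
  refine ⟨∏ n ∈ h.toFinset.erase 0, n,
    Finset.prod_pos fun n hn => Nat.pos_of_ne_zero (Finset.ne_of_mem_erase hn), fun g hg => ?_⟩
  rw [← orderOf_dvd_iff_pow_eq_one]
  exact Finset.dvd_prod_of_mem _ (Finset.mem_erase.mpr ⟨hg.orderOf_pos.ne', by simp⟩)

theorem MulEquiv.isOfFinOrder_apply_iff {G H : Type*} [Monoid G] [Monoid H] (φ : G ≃* H)
    {g : G} : IsOfFinOrder (φ g) ↔ IsOfFinOrder g :=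
  φ.injective.isOfFinOrder_iff (f := φ.toMonoidHom)

section

variable {G : Type*} [Group G]

theorem Subgroup.Characteristic.apply_mem {H : Subgroup G} [H.Characteristic] (φ : G ≃* G)
    {g : G} (hg : g ∈ H) : φ g ∈ H :=
  characteristic_iff_le_comap.mp ‹_› φ hg

theorem Commute.pow_eq_pow_of_pow_eq_pow {e : ℕ} (hexp : ∀ g : G, IsOfFinOrder g → g ^ e = 1)
    {x y : G} (hxy : Commute x y) {k : ℕ} (hk : 0 < k) (h : x ^ k = y ^ k) : x ^ e = y ^ e := by
  have htor : IsOfFinOrder (x * y⁻¹) := isOfFinOrder_iff_pow_eq_one.mpr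
    ⟨k, hk, by rw [hxy.inv_right.mul_pow, h, inv_pow, mul_inv_cancel]⟩
  rw [← mul_inv_eq_one, ← inv_pow, ← hxy.inv_right.mul_pow]
  exact hexp _ htor

theorem Subgroup.index_centralizer_singleton (g : G) :
    (centralizer {g}).index = {h | IsConj g h}.ncard := by
  have e : orbit (ConjAct G) g ≃ G ⧸ centralizer {g} :=
    (orbitEquivQuotientStabilizer (ConjAct G) g).trans
      (quotientEquivOfEq (ConjAct.stabilizer_eq_centralizer g))
  rw [index, ← Nat.card_congr e, Nat.card_coe_set_eq]
  congr 1
  ext h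
  exact ConjAct.mem_orbit_conjAct.trans isConj_comm

theorem ncard_setOf_isConj_apply (φ : MulAut G) (g : G) :
    {h | IsConj (φ g) h}.ncard = {h | IsConj g h}.ncard := by
  have : {h | IsConj (φ g) h} = φ.toEquiv '' {h | IsConj g h} := by
    rw [Equiv.image_eq_preimage_symm]
    ext h
    refine ⟨fun hc => ?_, fun hc => ?_⟩
    · simpa using φ.symm.toMonoidHom.map_isConj hc
    · simpa using φ.toMonoidHom.map_isConj hc
  rw [this, Set.ncard_image_of_injective _ φ.toEquiv.injective]

namespace IsFCGroup

theorem index_centralizer_ne_zero (hFC : IsFCGroup G) (g : G) :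
    (centralizer {g}).index ≠ 0 := by
  rw [index_centralizer_singleton]
  exact Set.ncard_ne_zero_of_mem (IsConj.refl g) (hFC g)

theorem pow_factorial_mem_center (hFC : IsFCGroup G) {c : ℕ}
    (hc : ∀ x : G, {h | IsConj x h}.ncard ≤ c) (g : G) : g ^ c.factorial ∈ center G := by
  refine mem_center_iff.mpr fun x => ?_
  have := pow_mem_of_index_ne_zero_of_dvd (hFC.index_centralizer_ne_zero x) g
    (n := c.factorial) fun m hm hmc =>
      Nat.dvd_factorial hm (hmc.trans ((index_centralizer_singleton x).trans_le (hc x)))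
  exact (mem_centralizer_singleton_iff.mp this).symm

theorem finiteIndex_center_closure (hFC : IsFCGroup G) {s : Set G} (hs : s.Finite) :
    (center (closure s)).FiniteIndex := by
  have : Finite s := hs
  have : (centralizer s).FiniteIndex := by
    rw [centralizer_eq_iInf, iInf_subtype']
    exact finiteIndex_iInf fun g => ⟨hFC.index_centralizer_ne_zero g⟩
  refine finiteIndex_of_le (H := (centralizer s).subgroupOf (closure s)) fun k hk => ?_
  rw [mem_subgroupOf, ← centralizer_closure, mem_centralizer_iff] at hk
  exact mem_center_iff.mpr fun h => Subtype.ext (hk h h.2)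

theorem exists_pow_mul_eq (hFC : IsFCGroup G) (a b : G) :
    ∃ n, 0 < n ∧ Commute (a ^ n) (b ^ n) ∧ (a * b) ^ n = a ^ n * b ^ n := by
  set H := closure ({a, b} : Set G)
  have := hFC.finiteIndex_center_closure (Set.toFinite {a, b})
  let t := MonoidHom.transferCenterPow H
  have ht (x : H) : ((t x : H) : G) = (x : G) ^ (center H).index := by
    rw [MonoidHom.transferCenterPow_apply, SubmonoidClass.coe_pow]
  let a' : H := ⟨a, subset_closure (by simp)⟩
  let b' : H := ⟨b, subset_closure (by simp)⟩
  refine ⟨(center H).index, Nat.pos_of_ne_zero FiniteIndex.index_ne_zero, ?_, ?_⟩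
  · rw [← ht a', ← ht b']
    exact congrArg Subtype.val (mem_center_iff.mp (t b').2 (t a'))
  · rw [← ht a', ← ht b', show a * b = ((a' * b' : H) : G) from rfl, ← ht, map_mul]
    rfl

theorem pow_mul_eq_of_pow_mem (hFC : IsFCGroup G) {D : Subgroup G} [IsMulTorsionFree D]
    (hDc : D ≤ center G) {M : ℕ} (hpow : ∀ g : G, g ^ M ∈ D) (a b : G) :
    (a * b) ^ M = a ^ M * b ^ M := by
  obtain ⟨n, hn, hcomm, hab⟩ := hFC.exists_pow_mul_eq a b
  have hroot := pow_left_injective (M := D) hn.ne' (a₁ := ⟨(a * b) ^ M, hpow _⟩)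
    (a₂ := ⟨a ^ M * b ^ M, mul_mem (hpow a) (hpow b)⟩) (Subtype.ext ?_)
  · exact congrArg Subtype.val hroot
  · simp only [SubmonoidClass.mk_pow]
    rw [← pow_mul, mul_comm, pow_mul, hab, hcomm.mul_pow, ((hDc (hpow a)).comm _).mul_pow,
      ← pow_mul, ← pow_mul, ← pow_mul, ← pow_mul, mul_comm n M]

theorem exists_retraction (hFC : IsFCGroup G) {D : Subgroup G} [IsMulTorsionFree D]
    (hDc : D ≤ center G) (hDdiv : ∀ (d : D) (n : ℕ), n ≠ 0 → ∃ d', d' ^ n = d) {M : ℕ}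
    (hM : M ≠ 0) (hpow : ∀ g : G, g ^ M ∈ D) :
    ∃ r : G →* D, (∀ d : D, r d = d) ∧ ∀ g, r g = 1 ↔ IsOfFinOrder g := by
  choose root hroot using fun g : G => hDdiv ⟨g ^ M, hpow g⟩ M hM
  have hcomm (x y : D) : Commute x y := Subtype.ext ((hDc y.2).comm x).eq.symm
  let r : G →* D := MonoidHom.mk' root fun a b => pow_left_injective hM <| Subtype.ext <| by
    simp only [hroot, (hcomm _ _).mul_pow, coe_mul]
    exact hFC.pow_mul_eq_of_pow_mem hDc hpow a b
  have hr (g : G) : r g ^ M = ⟨g ^ M, hpow g⟩ := hroot g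
  refine ⟨r, fun d => pow_left_injective hM ?_, fun g => ⟨fun h => ?_, fun h => ?_⟩⟩
  · change r d ^ M = d ^ M
    rw [hr]
    rfl
  · have hgM : g ^ M = 1 := by simpa [h] using (congrArg Subtype.val (hr g)).symm
    exact isOfFinOrder_iff_pow_eq_one.mpr ⟨M, Nat.pos_of_ne_zero hM, hgM⟩
  · refine IsOfFinOrder.eq_one' (IsOfFinOrder.of_pow ?_ hM)
    rw [hr, ← Submonoid.isOfFinOrder_coe]
    exact h.pow

end IsFCGroup

section Retraction

variable {D : Subgroup G} (r : G →* D)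

def kerPart (g : G) : G := g * (r g : G)⁻¹

variable {r}

theorem kerPart_mul_apply (g : G) : kerPart r g * r g = g := inv_mul_cancel_right g _

theorem map_kerPart (hr : ∀ d : D, r d = d) (g : G) : r (kerPart r g) = 1 := by
  simp [kerPart, hr]

theorem map_kerPart_mul_coe (hr : ∀ d : D, r d = d) (g : G) (d : D) :
    r (kerPart r g * d) = d := by
  rw [map_mul, map_kerPart hr, hr, one_mul]

theorem kerPart_kerPart_mul_coe (hr : ∀ d : D, r d = d) (g : G) (d : D) :
    kerPart r (kerPart r g * d) = kerPart r g := by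
  rw [kerPart, map_kerPart_mul_coe hr, mul_inv_cancel_right]

theorem kerPart_mul (hDc : D ≤ center G) (a b : G) :
    kerPart r (a * b) = kerPart r a * kerPart r b := by
  have hc := ((hDc (inv_mem (r a).2)).comm (kerPart r b)).eq
  simp only [kerPart, map_mul, coe_mul, mul_inv_rev, mul_assoc] at hc ⊢
  rw [hc]

def autOfRetraction (hDc : D ≤ center G) (hr : ∀ d : D, r d = d) (ψ : D ≃* D) : MulAut G where
  toFun g := kerPart r g * ψ (r g)
  invFun g := kerPart r g * ψ.symm (r g)
  left_inv g := by
    beta_reduce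
    rw [kerPart_kerPart_mul_coe hr, map_kerPart_mul_coe hr, ψ.symm_apply_apply,
      kerPart_mul_apply]
  right_inv g := by
    beta_reduce
    rw [kerPart_kerPart_mul_coe hr, map_kerPart_mul_coe hr, ψ.apply_symm_apply,
      kerPart_mul_apply]
  map_mul' a b := by
    simp only [kerPart_mul hDc, map_mul, coe_mul]
    rw [mul_assoc, ← mul_assoc (kerPart r b), ← ((hDc (ψ (r a)).2).comm _).eq]
    simp only [mul_assoc]

theorem autOfRetraction_apply (hDc : D ≤ center G) (hr : ∀ d : D, r d = d) (ψ : D ≃* D)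
    (g : G) : autOfRetraction hDc hr ψ g = kerPart r g * ψ (r g) := rfl

theorem coe_map_mulAut_apply [D.Characteristic] (hr : ∀ d : D, r d = d)
    (hker : ∀ g, r g = 1 ↔ IsOfFinOrder g) (φ : MulAut G) (g : G) :
    (r (φ g) : G) = φ (r g) := by
  have h1 : r (φ (kerPart r g)) = 1 :=
    (hker _).mpr (φ.isOfFinOrder_apply_iff.mpr ((hker _).mp (map_kerPart hr g)))
  have h2 : φ g = φ (kerPart r g) * ((⟨φ (r g), Characteristic.apply_mem φ (r g).2⟩ : D) : G) := by
    rw [coe_mk, ← map_mul, kerPart_mul_apply]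
  rw [h2, map_mul, h1, one_mul, hr]

theorem kerPart_mulAut_apply [D.Characteristic] (hr : ∀ d : D, r d = d)
    (hker : ∀ g, r g = 1 ↔ IsOfFinOrder g) (φ : MulAut G) (g : G) :
    kerPart r (φ g) = φ (kerPart r g) := by
  rw [kerPart, kerPart, coe_map_mulAut_apply hr hker, map_mul, map_inv]

theorem even_omegaOrbits_of_retraction [D.Characteristic] (hDc : D ≤ center G)
    (hDtrans : ∀ a b : D, a ≠ 1 → b ≠ 1 → ∃ ψ : D ≃* D, ψ a = b) (hD : D ≠ ⊥)
    (hr : ∀ d : D, r d = d) (hker : ∀ g, r g = 1 ↔ IsOfFinOrder g) :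
    Even (omegaOrbits G) := by
  obtain ⟨d, hd⟩ := ne_bot_iff_exists_ne_one.mp hD
  refine Setoid.even_card_quotient_of_fold (orbitRel (MulAut G) G) IsOfFinOrder (kerPart r)
    ?_ ?_ (fun a => (hker _).mp (map_kerPart hr a)) (fun a ha => ?_) ?_ fun a ha => ?_
  · rintro _ b ⟨φ, rfl⟩
    exact φ.isOfFinOrder_apply_iff
  · rintro _ b ⟨φ, rfl⟩
    exact ⟨φ, (kerPart_mulAut_apply hr hker φ b).symm⟩
  · rw [kerPart, (hker a).mpr ha, coe_one, inv_one, mul_one]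
  · rintro a b ha hb ⟨φ, hφ : φ (kerPart r b) = kerPart r a⟩
    obtain ⟨ψ, hψ⟩ := hDtrans (r (φ b)) (r a)
      (by rwa [Ne, hker, MulEquiv.isOfFinOrder_apply_iff]) (by rwa [Ne, hker])
    refine ⟨φ.trans (autOfRetraction hDc hr ψ), ?_⟩
    change autOfRetraction hDc hr ψ (φ b) = a
    rw [autOfRetraction_apply, hψ, kerPart_mulAut_apply hr hker, hφ, kerPart_mul_apply]
  · have hrad : r (a * d) = d := by rw [map_mul, (hker a).mpr ha, hr, one_mul]
    refine ⟨a * d, fun h => hd ?_, ?_⟩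
    · rw [← hrad, hker]
      exact h
    · rw [kerPart, hrad, mul_inv_cancel_right]

end Retraction

def divisibleCenter (G : Type*) [Group G] : Subgroup G where
  carrier := {g | ∀ n, 0 < n → ∃ z ∈ center G, z ^ n = g}
  one_mem' _ _ := ⟨1, one_mem _, one_pow _⟩
  mul_mem' {a b} ha hb n hn := by
    obtain ⟨z, hz, rfl⟩ := ha n hn
    obtain ⟨w, hw, rfl⟩ := hb n hn
    exact ⟨z * w, mul_mem hz hw, (hz.comm w).mul_pow n⟩
  inv_mem' {a} ha n hn := by
    obtain ⟨z, hz, rfl⟩ := ha n hn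
    exact ⟨z⁻¹, inv_mem hz, inv_pow z n⟩

theorem divisibleCenter_le_center : divisibleCenter G ≤ center G := fun g hg => by
  obtain ⟨z, hz, rfl⟩ := hg 1 one_pos
  rwa [pow_one]

instance : (divisibleCenter G).Characteristic :=
  characteristic_iff_le_comap.mpr fun φ g hg n hn => by
    obtain ⟨z, hz, rfl⟩ := hg n hn
    exact ⟨φ z, Characteristic.apply_mem φ hz, (map_pow φ z n).symm⟩

instance : CommGroup (divisibleCenter G) where
  mul_comm a b := Subtype.ext ((divisibleCenter_le_center a.2).comm b)

theorem isMulTorsionFree_divisibleCenter {e : ℕ} (he : 0 < e)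
    (hexp : ∀ g : G, IsOfFinOrder g → g ^ e = 1) : IsMulTorsionFree (divisibleCenter G) := by
  refine IsMulTorsionFree.of_not_isOfFinOrder fun d hd htor => hd ?_
  obtain ⟨m, hm, hdm⟩ := (Submonoid.isOfFinOrder_coe.mpr htor).exists_pow_eq_one
  obtain ⟨z, hz, hze⟩ := d.2 e he
  refine Subtype.ext (hze.symm.trans ?_)
  rw [← one_pow e]
  refine (Commute.one_right z).pow_eq_pow_of_pow_eq_pow hexp (mul_pos he hm) ?_
  rw [pow_mul, hze, hdm, one_pow]

theorem exists_pow_eq_of_mem_divisibleCenter {e : ℕ} (he : 0 < e)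
    (hexp : ∀ g : G, IsOfFinOrder g → g ^ e = 1) (d : divisibleCenter G) (n : ℕ) (hn : n ≠ 0) :
    ∃ d' : divisibleCenter G, d' ^ n = d := by
  obtain ⟨u, hu, hun⟩ := d.2 (n * e) (Nat.mul_pos (Nat.pos_of_ne_zero hn) he)
  refine ⟨⟨u ^ e, fun m hm => ?_⟩, Subtype.ext ?_⟩
  · obtain ⟨z, hz, hzm⟩ := d.2 (m * (n * e)) (by positivity)
    refine ⟨z ^ e, pow_mem hz e, ?_⟩
    rw [← pow_mul, mul_comm, pow_mul]
    refine ((pow_mem hz m).comm u).pow_eq_pow_of_pow_eq_pow hexp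
      (Nat.mul_pos (Nat.pos_of_ne_zero hn) he) ?_
    rw [← pow_mul, hzm, hun]
  · rw [SubmonoidClass.coe_pow, ← pow_mul, mul_comm e n, hun]

section FinitelyManyOrbits

variable [Finite (orbitRel.Quotient (MulAut G) G)]

theorem exists_pow_eq_one_of_isOfFinOrder :
    ∃ e, 0 < e ∧ ∀ g : G, IsOfFinOrder g → g ^ e = 1 :=
  exists_pow_eq_one_of_finite_range_orderOf
    (finite_range_of_smul_invariant orderOf fun φ g => MulEquiv.orderOf_eq φ g)

theorem IsFCGroup.exists_pow_mem_center (hFC : IsFCGroup G) :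
    ∃ k, 0 < k ∧ ∀ g : G, g ^ k ∈ center G := by
  obtain ⟨c, hc⟩ := (finite_range_of_smul_invariant (fun x : G => {h | IsConj x h}.ncard)
    ncard_setOf_isConj_apply).bddAbove
  exact ⟨c.factorial, c.factorial_pos, hFC.pow_factorial_mem_center fun x => hc ⟨x, rfl⟩⟩

theorem pow_mem_divisibleCenter {e : ℕ} (hexp : ∀ g : G, IsOfFinOrder g → g ^ e = 1) {a : G}
    (ha : a ∈ center G) : a ^ e ∈ divisibleCenter G := by
  intro n hn
  obtain ⟨i, j, hij, hφ⟩ : ∃ i j, i < j ∧ ∃ φ : MulAut G, φ (a ^ n ^ j) = a ^ n ^ i := by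
    obtain ⟨i, j, hne, heq⟩ := Finite.exists_ne_map_eq_of_infinite
      fun i : ℕ => Quotient.mk (orbitRel (MulAut G) G) (a ^ n ^ i)
    rcases hne.lt_or_gt with h | h
    · exact ⟨i, j, h, Quotient.exact heq⟩
    · exact ⟨j, i, h, Quotient.exact heq.symm⟩
  obtain ⟨φ, hφ⟩ := hφ
  have hb : φ a ∈ center G := Characteristic.apply_mem φ ha
  obtain ⟨k, rfl⟩ := Nat.exists_eq_add_of_lt hij
  refine ⟨φ a ^ (n ^ k * e), pow_mem hb _, ?_⟩
  rw [← pow_mul, show n ^ k * e * n = n ^ (k + 1) * e by ring, pow_mul]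
  refine ((pow_mem hb _).comm a).pow_eq_pow_of_pow_eq_pow hexp (pow_pos hn i) ?_
  rw [← pow_mul, ← pow_add, add_comm, ← add_assoc, ← map_pow, hφ]

end FinitelyManyOrbits

end

theorem stmt9_general (G : Type*) [Group G] (hFC : IsFCGroup G)
    (hfin : HasFinitelyManyAutOrbits G) (hodd : Odd (omegaOrbits G)) :
    ∃ n : ℕ, 0 < n ∧ ∀ g : G, g ^ n = 1 := by
  have : Finite (orbitRel.Quotient (MulAut G) G) := hfin
  obtain ⟨e, he, hexp⟩ := exists_pow_eq_one_of_isOfFinOrder (G := G)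
  refine ⟨e, he, fun x => hexp x (not_not.mp fun hx => ?_)⟩
  obtain ⟨k, hk, hkc⟩ := hFC.exists_pow_mem_center
  have := isMulTorsionFree_divisibleCenter he hexp
  have hdiv := exists_pow_eq_of_mem_divisibleCenter he hexp
  have hpow (g : G) : g ^ (k * e) ∈ divisibleCenter G := by
    rw [pow_mul]
    exact pow_mem_divisibleCenter hexp (hkc g)
  obtain ⟨r, hr, hker⟩ :=
    hFC.exists_retraction divisibleCenter_le_center hdiv (by positivity) hpow
  have hD : divisibleCenter G ≠ ⊥ := fun hbot => hx <| isOfFinOrder_iff_pow_eq_one.mpr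
    ⟨k * e, by positivity, mem_bot.mp (hbot ▸ hpow x)⟩
  exact Nat.not_even_iff_odd.mpr hodd <| even_omegaOrbits_of_retraction divisibleCenter_le_center
    (fun a b ha hb => CommGroup.exists_mulEquiv_apply_eq hdiv ha hb) hD hr hker

theorem stmt9 (G : Type*) [Group G] [Infinite G] (hFC : IsFCGroup G)
    (hfin : HasFinitelyManyAutOrbits G) (hodd : Odd (omegaOrbits G)) :
    ∃ n : ℕ, 0 < n ∧ ∀ g : G, g ^ n = 1 :=
  stmt9_general G hFC hfin hodd
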